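/- arXiv:1809.02439 — 4 statements merged into one kernel-verified Lean document; each statement's English description precedes it below -/
import Mathlib

section
/- For fixed b ∈ ℝⁿ, the unique minimizer in x of the surrogate functional f(x,b) = f(x) + s(x,b) is given in closed form by S_{λτ/(μτ+1)}[ (b + τ Aᵀ(y − Ab)) / (1 + μτ) ], where S denotes componentwise soft thresholding. -/
/-- Scalar soft thresholding operator. -/
noncomputable def softThresh (β z : ℝ) : ℝ :=
  if β < z then z - β else if z < -β then z + β else 0

/-- Componentwise soft thresholding on ℝⁿ. -/
noncomputable def softThreshVec {n : ℕ} (β : ℝ) (x : EuclideanSpace ℝ (Fin n)) :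
    EuclideanSpace ℝ (Fin n) :=
  WithLp.toLp 2 (fun i => softThresh β (x i))

/-- The ℓ¹ norm on ℝⁿ. -/
noncomputable def l1norm {n : ℕ} (x : EuclideanSpace ℝ (Fin n)) : ℝ := ∑ i, |x i|

/-- The Elastic-net functional f(x) = (1/2)‖y − Ax‖² + λ‖x‖₁ + (μ/2)‖x‖². -/
noncomputable def enet {n m : ℕ} (A : EuclideanSpace ℝ (Fin n) →L[ℝ] EuclideanSpace ℝ (Fin m))
    (y : EuclideanSpace ℝ (Fin m)) (lam μ : ℝ) (x : EuclideanSpace ℝ (Fin n)) : ℝ :=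
  (1/2) * ‖y - A x‖^2 + lam * l1norm x + (μ/2) * ‖x‖^2

/-- The IST map Γ(x) = S_{λτ/(μτ+1)}[(x + τAᵀ(y − Ax))/(1 + μτ)]. -/
noncomputable def istMap {n m : ℕ} (A : EuclideanSpace ℝ (Fin n) →L[ℝ] EuclideanSpace ℝ (Fin m))
    (y : EuclideanSpace ℝ (Fin m)) (lam μ τ : ℝ) (x : EuclideanSpace ℝ (Fin n)) :
    EuclideanSpace ℝ (Fin n) :=
  softThreshVec (lam * τ / (μ * τ + 1))
    ((1 + μ * τ)⁻¹ • (x + τ • (ContinuousLinearMap.adjoint A) (y - A x)))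

/-- The surrogate correction term s(x,b). -/
noncomputable def surr {n m : ℕ} (A : EuclideanSpace ℝ (Fin n) →L[ℝ] EuclideanSpace ℝ (Fin m))
    (τ : ℝ) (x b : EuclideanSpace ℝ (Fin n)) : ℝ :=
  (1 / (2 * τ)) * ‖x - b‖^2 - (1/2) * ‖A x - A b‖^2

/-!
After expanding the squares, the terms `‖A x‖²` of `enet` and `surr` cancel, so up to an
additive constant `F x = κ (‖x - z‖² + 2β‖x‖₁)` with `κ = (1 + μτ)/(2τ)`, `β = λτ/(1 + μτ)` and
`z = (b + τ Aᵀ(y - A b))/(1 + μτ)`. This objective is separable, and in each coordinate soft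
thresholding minimizes it with quadratic growth. Summing, `κ‖x - w‖² + F w ≤ F x`, which gives
minimality and uniqueness at once.
-/

open RealInnerProductSpace

lemma softThresh_add_le {β : ℝ} (hβ : 0 ≤ β) (z t : ℝ) :
    (t - softThresh β z) ^ 2 + ((softThresh β z - z) ^ 2 + 2 * β * |softThresh β z|)
      ≤ (t - z) ^ 2 + 2 * β * |t| := by
  have hβt : β * t ≤ β * |t| := mul_le_mul_of_nonneg_left (le_abs_self t) hβ
  have hβt' : -(β * t) ≤ β * |t| := by
    simpa using mul_le_mul_of_nonneg_left (neg_le_abs t) hβ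
  unfold softThresh
  split_ifs with hpos hneg
  · rw [abs_of_pos (sub_pos.2 hpos)]
    nlinarith
  · rw [abs_of_neg (by linarith)]
    nlinarith
  · have hz : |z| ≤ β := abs_le.2 ⟨by linarith, by linarith⟩
    have htz : t * z ≤ β * |t| := calc
      t * z ≤ |t| * |z| := by rw [← abs_mul]; exact le_abs_self _
      _ ≤ β * |t| := by rw [mul_comm]; exact mul_le_mul_of_nonneg_right hz (abs_nonneg t)
    simp only [abs_zero]
    nlinarith

noncomputable def proxObjective {n : ℕ} (β : ℝ) (z x : EuclideanSpace ℝ (Fin n)) : ℝ :=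
  ‖x - z‖ ^ 2 + 2 * β * l1norm x

lemma proxObjective_softThreshVec_add_le {n : ℕ} {β : ℝ} (hβ : 0 ≤ β)
    (z x : EuclideanSpace ℝ (Fin n)) :
    ‖x - softThreshVec β z‖ ^ 2 + proxObjective β z (softThreshVec β z)
      ≤ proxObjective β z x := by
  simp only [proxObjective, l1norm, EuclideanSpace.real_norm_sq_eq, PiLp.sub_apply,
    Finset.mul_sum, ← Finset.sum_add_distrib]
  exact Finset.sum_le_sum fun i _ => softThresh_add_le hβ (z i) (x i)

lemma exists_enet_add_surr_eq_mul_proxObjective_add {n m : ℕ}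
    (A : EuclideanSpace ℝ (Fin n) →L[ℝ] EuclideanSpace ℝ (Fin m))
    (y : EuclideanSpace ℝ (Fin m)) (lam μ τ : ℝ) (hτ : τ ≠ 0) (hμτ : μ * τ + 1 ≠ 0)
    (b : EuclideanSpace ℝ (Fin n)) :
    ∃ C, ∀ x, enet A y lam μ x + surr A τ x b =
      (μ * τ + 1) / (2 * τ) * proxObjective (lam * τ / (μ * τ + 1))
        ((1 + μ * τ)⁻¹ • (b + τ • (ContinuousLinearMap.adjoint A) (y - A b))) x + C := by
  set z := (1 + μ * τ)⁻¹ • (b + τ • (ContinuousLinearMap.adjoint A) (y - A b)) with hz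
  refine ⟨(1/2) * ‖y‖ ^ 2 - (1/2) * ‖A b‖ ^ 2 + 1 / (2 * τ) * ‖b‖ ^ 2
    - (μ * τ + 1) / (2 * τ) * ‖z‖ ^ 2, fun x => ?_⟩
  have hxz : (1 + μ * τ) * ⟪x, z⟫ = ⟪x, b⟫ + τ * (⟪A x, y⟫ - ⟪A x, A b⟫) := by
    rw [hz, real_inner_smul_right, inner_add_right, real_inner_smul_right,
      ContinuousLinearMap.adjoint_inner_right, inner_sub_right,
      mul_inv_cancel_left₀ (by rwa [add_comm])]
  unfold enet surr proxObjective
  rw [norm_sub_sq_real y, norm_sub_sq_real (A x), norm_sub_sq_real x b, norm_sub_sq_real x z,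
    real_inner_comm (A x) y]
  field_simp
  linear_combination 2 * hxz

theorem surrogate_unique_minimizer_general {n m : ℕ}
    (A : EuclideanSpace ℝ (Fin n) →L[ℝ] EuclideanSpace ℝ (Fin m))
    (y : EuclideanSpace ℝ (Fin m)) (lam μ τ : ℝ)
    (hlam : 0 < lam) (hμ : 0 < μ) (hτ : 0 < τ)
    (b : EuclideanSpace ℝ (Fin n)) :
    let F : EuclideanSpace ℝ (Fin n) → ℝ := fun x => enet A y lam μ x + surr A τ x b
    let w := softThreshVec (lam * τ / (μ * τ + 1))
      ((1 + μ * τ)⁻¹ • (b + τ • (ContinuousLinearMap.adjoint A) (y - A b)))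
    (∀ x, F w ≤ F x) ∧ (∀ x, (∀ x', F x ≤ F x') → x = w) := by
  intro F w
  have hμτ : 0 < μ * τ + 1 := by positivity
  have hβ : 0 ≤ lam * τ / (μ * τ + 1) := by positivity
  have hκ : 0 < (μ * τ + 1) / (2 * τ) := by positivity
  obtain ⟨C, hF⟩ :=
    exists_enet_add_surr_eq_mul_proxObjective_add A y lam μ τ hτ.ne' hμτ.ne' b
  have quadratic_growth : ∀ x, (μ * τ + 1) / (2 * τ) * ‖x - w‖ ^ 2 + F w ≤ F x := fun x => by
    have hprox := mul_le_mul_of_nonneg_left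
      (proxObjective_softThreshVec_add_le hβ
        ((1 + μ * τ)⁻¹ • (b + τ • (ContinuousLinearMap.adjoint A) (y - A b))) x) hκ.le
    simp only [F, hF]
    linarith
  refine ⟨fun x => ?_, fun x hx => ?_⟩
  · linarith [quadratic_growth x, mul_nonneg hκ.le (sq_nonneg ‖x - w‖)]
  have hdist : (μ * τ + 1) / (2 * τ) * ‖x - w‖ ^ 2 ≤ 0 := by
    linarith [quadratic_growth x, hx w]
  have hxw : ‖x - w‖ ^ 2 = 0 :=
    le_antisymm (nonpos_of_mul_nonpos_right hdist hκ) (sq_nonneg _)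
  exact sub_eq_zero.1 (norm_eq_zero.1 (pow_eq_zero_iff two_ne_zero |>.1 hxw))

theorem surrogate_unique_minimizer {n m : ℕ}
    (A : EuclideanSpace ℝ (Fin n) →L[ℝ] EuclideanSpace ℝ (Fin m))
    (y : EuclideanSpace ℝ (Fin m)) (lam μ τ : ℝ)
    (hlam : 0 < lam) (hμ : 0 < μ) (hτ : 0 < τ) (hA : τ * ‖A‖^2 ≤ 1)
    (b : EuclideanSpace ℝ (Fin n)) :
    let F : EuclideanSpace ℝ (Fin n) → ℝ := fun x => enet A y lam μ x + surr A τ x b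
    let w := softThreshVec (lam * τ / (μ * τ + 1))
      ((1 + μ * τ)⁻¹ • (b + τ • (ContinuousLinearMap.adjoint A) (y - A b)))
    (∀ x, F w ≤ F x) ∧ (∀ x, (∀ x', F x ≤ F x') → x = w) :=
  surrogate_unique_minimizer_general A y lam μ τ hlam hμ hτ b
end

section
/- The minimizer z of the Elastic-net functional f is a fixed point of the IST map Γ(x) = S_{λτ/(μτ+1)}[(x + τAᵀ(y − Ax))/(1 + μτ)], i.e., Γ(z) = z. -/
/-!
Perturbing the minimizer `z` along the coordinate `i` shows that the line `t ↦ t * dᵢ`, with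
`dᵢ = (Aᵀ(y − Az))ᵢ − μ zᵢ`, lies below `t ↦ λ|zᵢ + t| − λ|zᵢ|` up to a quadratic error.
Convexity of `|·|` lets one drop the error, so `dᵢ` is a subgradient of `λ|·|` at `zᵢ`: `|dᵢ| ≤ λ` and
`zᵢ dᵢ = λ|zᵢ|`. Since `Γ(z)ᵢ = S_{κλ}(zᵢ + κ dᵢ)` with `κ = τ/(1 + μτ)`, these are exactly the
conditions under which soft thresholding returns `zᵢ`.
-/

open Set Filter Topology ContinuousLinearMap EuclideanSpace

theorem ConvexOn.mul_le_sub_of_forall_mul_le_sub_add_mul_sq {φ : ℝ → ℝ}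
    (hφ : ConvexOn ℝ univ φ) {a d C : ℝ} (h : ∀ t, t * d ≤ φ (a + t) - φ a + C * t ^ 2)
    (s : ℝ) : s * d ≤ φ (a + s) - φ a := by
  have hsmall : ∀ ε ∈ Ioo (0 : ℝ) 1, s * d ≤ φ (a + s) - φ a + C * s ^ 2 * ε := by
    rintro ε ⟨hε0, hε1⟩
    have hchord : φ (a + ε * s) ≤ (1 - ε) * φ a + ε * φ (a + s) := by
      have := hφ.2 (mem_univ a) (mem_univ (a + s)) (by linarith : 0 ≤ 1 - ε) hε0.le (by ring)
      simp only [smul_eq_mul] at this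
      rwa [show (1 - ε) * a + ε * (a + s) = a + ε * s by ring] at this
    have hε := h (ε * s)
    refine le_of_mul_le_mul_left ?_ hε0
    nlinarith
  have hlim : Tendsto (fun ε => φ (a + s) - φ a + C * s ^ 2 * ε) (𝓝[>] 0) (𝓝 (φ (a + s) - φ a)) :=
    tendsto_nhdsWithin_of_tendsto_nhds <|
      (by fun_prop : Continuous fun ε : ℝ => φ (a + s) - φ a + C * s ^ 2 * ε).tendsto' 0 _ (by simp)
  exact ge_of_tendsto hlim (eventually_of_mem (Ioo_mem_nhdsGT zero_lt_one) hsmall)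

theorem abs_le_and_mul_eq_of_forall_mul_le {lam a d : ℝ} (hlam : 0 ≤ lam)
    (h : ∀ s, s * d ≤ lam * |a + s| - lam * |a|) : |d| ≤ lam ∧ a * d = lam * |a| := by
  have hsub : ∀ s, s * d ≤ lam * |s| := fun s =>
    (h s).trans (by nlinarith [abs_add_le a s])
  refine ⟨abs_le.2 ⟨?_, ?_⟩, le_antisymm ?_ ?_⟩
  · have := hsub (-1)
    norm_num at this
    linarith
  · simpa using hsub 1
  · have := h a
    rw [← two_mul, abs_mul, abs_two] at this
    linarith
  · have := h (-a)
    rw [add_neg_cancel, abs_zero] at this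
    linarith

theorem softThresh_add_eq_self {β a e : ℝ} (he : |e| ≤ β) (hae : a * e = β * |a|) :
    softThresh β (a + e) = a := by
  obtain ⟨hβe, heβ⟩ := abs_le.1 he
  unfold softThresh
  rcases lt_trichotomy a 0 with ha | rfl | ha
  · have : e = -β := mul_left_cancel₀ ha.ne (by rw [hae, abs_of_neg ha]; ring)
    rw [if_neg (by linarith), if_pos (by linarith)]
    linarith
  · rw [if_neg (by linarith), if_neg (by linarith)]
  · have : e = β := mul_left_cancel₀ ha.ne' (by rw [hae, abs_of_pos ha]; ring)
    rw [if_pos (by linarith)]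
    linarith

theorem norm_sub_map_add_sq {E F : Type*} [NormedAddCommGroup E] [InnerProductSpace ℝ E]
    [CompleteSpace E] [NormedAddCommGroup F] [InnerProductSpace ℝ F] [CompleteSpace F]
    (A : E →L[ℝ] F) (y : F) (x v : E) :
    ‖y - A (x + v)‖ ^ 2 = ‖y - A x‖ ^ 2 - 2 * inner ℝ (adjoint A (y - A x)) v + ‖A v‖ ^ 2 := by
  rw [map_add, ← sub_sub, norm_sub_sq_real, adjoint_inner_left]

section

variable {n m : ℕ}

theorem l1norm_add_single (x : EuclideanSpace ℝ (Fin n)) (i : Fin n) (t : ℝ) :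
    l1norm (x + single i t) = l1norm x + (|x i + t| - |x i|) := by
  have hdiff : ∑ j, (|(x + single i t) j| - |x j|) = |x i + t| - |x i| := by
    rw [Finset.sum_eq_single i (fun j _ hj => by simp [hj]) (by simp)]
    simp
  rw [l1norm, l1norm, ← hdiff, Finset.sum_sub_distrib]
  ring

theorem enet_add_single (A : EuclideanSpace ℝ (Fin n) →L[ℝ] EuclideanSpace ℝ (Fin m))
    (y : EuclideanSpace ℝ (Fin m)) (lam μ : ℝ) (x : EuclideanSpace ℝ (Fin n)) (i : Fin n)
    (t : ℝ) :
    enet A y lam μ (x + single i t) = enet A y lam μ x + t * (μ * x i - adjoint A (y - A x) i)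
      + (lam * |x i + t| - lam * |x i|) + (‖A (single i 1)‖ ^ 2 + μ) / 2 * t ^ 2 := by
  have hsingle : single i t = t • single i (1 : ℝ) := by
    ext j
    simp
  rw [enet, enet, norm_sub_map_add_sq, l1norm_add_single, norm_add_sq_real, inner_single_right,
    inner_single_right, PiLp.norm_single, hsingle, map_smul, norm_smul]
  simp only [Real.norm_eq_abs, mul_pow, sq_abs, RCLike.conj_to_real]
  ring

theorem istMap_apply (A : EuclideanSpace ℝ (Fin n) →L[ℝ] EuclideanSpace ℝ (Fin m))
    (y : EuclideanSpace ℝ (Fin m)) {lam μ τ : ℝ} (h : 1 + μ * τ ≠ 0)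
    (x : EuclideanSpace ℝ (Fin n)) (i : Fin n) :
    istMap A y lam μ τ x i = softThresh (τ / (1 + μ * τ) * lam)
      (x i + τ / (1 + μ * τ) * (adjoint A (y - A x) i - μ * x i)) := by
  simp only [istMap, softThreshVec, PiLp.smul_apply, PiLp.add_apply, smul_eq_mul]
  rw [add_comm (μ * τ) 1]
  congr 1 <;> field_simp; ring

end

theorem enet_minimizer_fixed_point_general {n m : ℕ}
    (A : EuclideanSpace ℝ (Fin n) →L[ℝ] EuclideanSpace ℝ (Fin m))
    (y : EuclideanSpace ℝ (Fin m)) (lam μ τ : ℝ)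
    (hlam : 0 < lam) (hμ : 0 < μ) (hτ : 0 < τ)
    (z : EuclideanSpace ℝ (Fin n)) (hz : ∀ x, enet A y lam μ z ≤ enet A y lam μ x) :
    istMap A y lam μ τ z = z := by
  ext i
  set d := adjoint A (y - A z) i - μ * z i
  have hlocal : ∀ t, t * d ≤
      lam * |z i + t| - lam * |z i| + (‖A (single i 1)‖ ^ 2 + μ) / 2 * t ^ 2 := fun t => by
    linarith [enet_add_single A y lam μ z i t, hz (z + single i t)]
  have hconvex : ConvexOn ℝ univ fun a : ℝ => lam * |a| := by
    have := (convexOn_univ_norm (E := ℝ)).smul hlam.le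
    simp only [Real.norm_eq_abs, smul_eq_mul] at this
    exact this
  obtain ⟨hd, hzd⟩ := abs_le_and_mul_eq_of_forall_mul_le hlam.le
    (hconvex.mul_le_sub_of_forall_mul_le_sub_add_mul_sq hlocal)
  have hκ : 0 < τ / (1 + μ * τ) := by positivity
  rw [istMap_apply A y (by positivity)]
  refine softThresh_add_eq_self ?_ ?_
  · rw [abs_mul, abs_of_pos hκ]
    exact mul_le_mul_of_nonneg_left hd hκ.le
  · rw [mul_left_comm, hzd, mul_assoc]

theorem enet_minimizer_fixed_point {n m : ℕ}
    (A : EuclideanSpace ℝ (Fin n) →L[ℝ] EuclideanSpace ℝ (Fin m))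
    (y : EuclideanSpace ℝ (Fin m)) (lam μ τ : ℝ)
    (hlam : 0 < lam) (hμ : 0 < μ) (hτ : 0 < τ) (hA : τ * ‖A‖^2 ≤ 1)
    (z : EuclideanSpace ℝ (Fin n)) (hz : ∀ x, enet A y lam μ z ≤ enet A y lam μ x) :
    istMap A y lam μ τ z = z :=
  enet_minimizer_fixed_point_general A y lam μ τ hlam hμ hτ z hz
end

section
/- (Batch IST convergence.) The iterates x_t = Γ(x_{t−1}), x_0 = 0, of batch IST for the Elastic-net converge to the unique minimizer z of f, with geometric rate ‖x_t − z‖₂ ≤ (1 + μτ)^{−t}‖x_0 − z‖₂. -/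
/-!
`Γ` is a `(1 + μτ)⁻¹`-contraction: soft thresholding is `1`-Lipschitz and, since `τ‖A‖² ≤ 1`,
the gradient step `w ↦ w - τ A†A w` is nonexpansive. A minimizer `z` of `f` is a fixed point of
`Γ`: the surrogate `v ↦ f v + ‖v - z‖² / (2τ) - ‖A (v - z)‖² / 2` majorizes `f`, agrees with `f`
at `z`, and is, up to a constant, `(1 + μτ) / τ` times a separable proximal objective whose
minimizer is `Γ z`. Quadratic growth of that objective gives
`f (Γ z) + (1 + μτ) / (2τ) ‖Γ z - z‖² ≤ f z ≤ f (Γ z)`, so `Γ z = z`.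
Iterating the contraction around its fixed point gives the geometric rate.
-/

open scoped RealInnerProductSpace InnerProduct

section SoftThreshold

variable {β : ℝ}

theorem abs_softThresh_sub_le (hβ : 0 ≤ β) (p q : ℝ) :
    |softThresh β p - softThresh β q| ≤ |p - q| := by
  unfold softThresh
  split_ifs <;> rw [abs_le] <;> constructor <;> linarith [le_abs_self (p - q), neg_abs_le (p - q)]

/-- `softThresh β p` minimizes the `1`-strongly convex `s ↦ (s - p)² / 2 + β |s|`. -/
theorem softThresh_prox (hβ : 0 ≤ β) (p s : ℝ) :
    (softThresh β p - p) ^ 2 / 2 + β * |softThresh β p| + (s - softThresh β p) ^ 2 / 2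
      ≤ (s - p) ^ 2 / 2 + β * |s| := by
  unfold softThresh
  split_ifs with h₁ h₂
  · rw [abs_of_pos (sub_pos.2 h₁)]
    nlinarith [mul_nonneg hβ (sub_nonneg.2 (le_abs_self s))]
  · rw [abs_of_neg (by linarith : p + β < 0)]
    nlinarith [mul_nonneg hβ (sub_nonneg.2 (neg_abs_le s))]
  · have hp : |p| ≤ β := abs_le.2 ⟨by linarith, by linarith⟩
    rw [abs_zero]
    nlinarith [mul_le_mul_of_nonneg_right hp (abs_nonneg s), le_abs_self (s * p), abs_mul s p]

variable {n : ℕ}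

theorem norm_le_norm_of_abs_apply_le {u v : EuclideanSpace ℝ (Fin n)}
    (h : ∀ i, |u i| ≤ |v i|) : ‖u‖ ≤ ‖v‖ := by
  refine (pow_le_pow_iff_left₀ (norm_nonneg u) (norm_nonneg v) two_ne_zero).1 ?_
  rw [EuclideanSpace.real_norm_sq_eq, EuclideanSpace.real_norm_sq_eq]
  exact Finset.sum_le_sum fun i _ => sq_le_sq.2 (h i)

theorem norm_softThreshVec_sub_le (hβ : 0 ≤ β) (p q : EuclideanSpace ℝ (Fin n)) :
    ‖softThreshVec β p - softThreshVec β q‖ ≤ ‖p - q‖ :=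
  norm_le_norm_of_abs_apply_le fun i => abs_softThresh_sub_le hβ (p i) (q i)

theorem softThreshVec_prox (hβ : 0 ≤ β) (p v : EuclideanSpace ℝ (Fin n)) :
    ‖softThreshVec β p - p‖ ^ 2 / 2 + β * l1norm (softThreshVec β p)
        + ‖v - softThreshVec β p‖ ^ 2 / 2
      ≤ ‖v - p‖ ^ 2 / 2 + β * l1norm v := by
  simp only [EuclideanSpace.real_norm_sq_eq, l1norm, Finset.sum_div, Finset.mul_sum,
    ← Finset.sum_add_distrib]
  exact Finset.sum_le_sum fun i _ => softThresh_prox hβ (p i) (v i)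

end SoftThreshold

theorem mul_sq_norm_apply_le {E F : Type*} [SeminormedAddCommGroup E]
    [SeminormedAddCommGroup F] [NormedSpace ℝ E] [NormedSpace ℝ F] {A : E →L[ℝ] F} {τ : ℝ}
    (hτ : 0 ≤ τ) (hA : τ * ‖A‖ ^ 2 ≤ 1) (w : E) : τ * ‖A w‖ ^ 2 ≤ ‖w‖ ^ 2 :=
  calc τ * ‖A w‖ ^ 2 ≤ τ * (‖A‖ * ‖w‖) ^ 2 := by gcongr; exact A.le_opNorm w
    _ = (τ * ‖A‖ ^ 2) * ‖w‖ ^ 2 := by ring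
    _ ≤ ‖w‖ ^ 2 := mul_le_of_le_one_left (sq_nonneg _) hA

theorem norm_sub_smul_adjoint_apply_le {E F : Type*} [NormedAddCommGroup E]
    [InnerProductSpace ℝ E] [CompleteSpace E] [NormedAddCommGroup F] [InnerProductSpace ℝ F]
    [CompleteSpace F] {A : E →L[ℝ] F} {τ : ℝ} (hτ : 0 ≤ τ) (hA : τ * ‖A‖ ^ 2 ≤ 1)
    (w : E) : ‖w - τ • (A†) (A w)‖ ≤ ‖w‖ := by
  have hA' : τ * ‖A†‖ ^ 2 ≤ 1 := by rwa [LinearIsometryEquiv.norm_map]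
  have hinner : ⟪w, (A†) (A w)⟫ = ‖A w‖ ^ 2 := by
    rw [ContinuousLinearMap.adjoint_inner_right, real_inner_self_eq_norm_sq]
  have hsq : ‖w - τ • (A†) (A w)‖ ^ 2
      = ‖w‖ ^ 2 - 2 * τ * ‖A w‖ ^ 2 + τ * (τ * ‖(A†) (A w)‖ ^ 2) := by
    rw [norm_sub_sq_real, real_inner_smul_right, norm_smul, hinner, Real.norm_of_nonneg hτ]
    ring
  refine (pow_le_pow_iff_left₀ (norm_nonneg _) (norm_nonneg w) two_ne_zero).1 ?_
  rw [hsq]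
  nlinarith [mul_le_mul_of_nonneg_left (mul_sq_norm_apply_le hτ hA' (A w)) hτ,
    mul_nonneg hτ (sq_nonneg ‖A w‖)]

section IST

variable {n m : ℕ} (A : EuclideanSpace ℝ (Fin n) →L[ℝ] EuclideanSpace ℝ (Fin m))
  (y : EuclideanSpace ℝ (Fin m))

/-- The point that `istMap` soft-thresholds. -/
noncomputable def istGradStep (μ τ : ℝ) (z : EuclideanSpace ℝ (Fin n)) :
    EuclideanSpace ℝ (Fin n) :=
  (1 + μ * τ)⁻¹ • (z + τ • (A†) (y - A z))

variable {lam μ τ : ℝ}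

theorem norm_istMap_sub_le (hlam : 0 ≤ lam) (hμ : 0 ≤ μ) (hτ : 0 ≤ τ) (hA : τ * ‖A‖ ^ 2 ≤ 1)
    (u v : EuclideanSpace ℝ (Fin n)) :
    ‖istMap A y lam μ τ u - istMap A y lam μ τ v‖ ≤ (1 + μ * τ)⁻¹ * ‖u - v‖ := by
  have hdiff : (u + τ • (A†) (y - A u)) - (v + τ • (A†) (y - A v))
      = (u - v) - τ • (A†) (A (u - v)) := by
    simp only [map_sub]
    module
  calc ‖istMap A y lam μ τ u - istMap A y lam μ τ v‖
      ≤ ‖istGradStep A y μ τ u - istGradStep A y μ τ v‖ :=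
        norm_softThreshVec_sub_le (by positivity) _ _
    _ = (1 + μ * τ)⁻¹ * ‖(u - v) - τ • (A†) (A (u - v))‖ := by
        rw [istGradStep, istGradStep, ← smul_sub, hdiff, norm_smul,
          Real.norm_of_nonneg (by positivity)]
    _ ≤ (1 + μ * τ)⁻¹ * ‖u - v‖ := by
        gcongr
        exact norm_sub_smul_adjoint_apply_le hτ hA _

/-- The surrogate `v ↦ f v + ‖v - z‖² / (2τ) - ‖A (v - z)‖² / 2`, scaled by `τ` and relative
to its value at `z`, is a proximal objective centred at `istGradStep z`. -/
theorem mul_enet_sub_enet_eq (hκ : 1 + μ * τ ≠ 0) (v z : EuclideanSpace ℝ (Fin n)) :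
    τ * (enet A y lam μ v - enet A y lam μ z) + ‖v - z‖ ^ 2 / 2 - τ * ‖A (v - z)‖ ^ 2 / 2
      = (1 + μ * τ) * ((‖v - istGradStep A y μ τ z‖ ^ 2 - ‖z - istGradStep A y μ τ z‖ ^ 2) / 2)
        + lam * τ * (l1norm v - l1norm z) := by
  set c := (A†) (y - A z)
  set p := istGradStep A y μ τ z with hp
  set d := v - z with hd
  have hv : v = z + d := by rw [hd, add_sub_cancel]
  have hdata : ‖y - A v‖ ^ 2 = ‖y - A z‖ ^ 2 - 2 * ⟪c, d⟫ + ‖A d‖ ^ 2 := by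
    rw [hv, map_add, ← sub_sub, norm_sub_sq_real, ← ContinuousLinearMap.adjoint_inner_left]
  have hreg : ‖v‖ ^ 2 = ‖z‖ ^ 2 + 2 * ⟪z, d⟫ + ‖d‖ ^ 2 := by
    rw [hv, norm_add_sq_real]
  have hprox : ‖v - p‖ ^ 2 = ‖z - p‖ ^ 2 + 2 * ⟪z - p, d⟫ + ‖d‖ ^ 2 := by
    rw [hv, add_sub_right_comm, norm_add_sq_real]
  have hcenter : (1 + μ * τ) * ⟪z - p, d⟫ = μ * τ * ⟪z, d⟫ - τ * ⟪c, d⟫ := by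
    have : (1 + μ * τ) • (z - p) = (μ * τ) • z - τ • c := by
      rw [hp, istGradStep, smul_sub, smul_inv_smul₀ hκ]
      module
    rw [← real_inner_smul_left, this, inner_sub_left, real_inner_smul_left, real_inner_smul_left]
  unfold enet
  linear_combination (τ / 2) * hdata + (τ * μ / 2) * hreg - ((1 + μ * τ) / 2) * hprox - hcenter

theorem istMap_eq_self_of_forall_enet_le (hlam : 0 ≤ lam) (hμ : 0 ≤ μ) (hτ : 0 < τ)
    (hA : τ * ‖A‖ ^ 2 ≤ 1) {z : EuclideanSpace ℝ (Fin n)}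
    (hz : ∀ w, enet A y lam μ z ≤ enet A y lam μ w) : istMap A y lam μ τ z = z := by
  set p := istGradStep A y μ τ z
  set β := lam * τ / (μ * τ + 1)
  set w := istMap A y lam μ τ z
  have hκ : 0 < 1 + μ * τ := by positivity
  have hβ : lam * τ = (1 + μ * τ) * β := by simp only [β]; field_simp; ring
  have hprox : (1 + μ * τ) * (‖w - p‖ ^ 2 / 2 + β * l1norm w + ‖w - z‖ ^ 2 / 2)
      ≤ (1 + μ * τ) * (‖z - p‖ ^ 2 / 2 + β * l1norm z) := by
    rw [norm_sub_rev w z]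
    exact mul_le_mul_of_nonneg_left (softThreshVec_prox (by positivity) p z) hκ.le
  have hid := mul_enet_sub_enet_eq A y (lam := lam) hκ.ne' w z
  have hdescent := mul_le_mul_of_nonneg_left (sub_nonneg.2 (hz w)) hτ.le
  have hsmooth := mul_sq_norm_apply_le hτ.le hA (w - z)
  rw [hβ] at hid
  have hgap : (1 + μ * τ) * ‖w - z‖ ^ 2 ≤ 0 := by linarith
  have hsq : ‖w - z‖ ^ 2 ≤ 0 := nonpos_of_mul_nonpos_right hgap hκ
  rw [← sub_eq_zero, ← norm_eq_zero]
  exact pow_eq_zero_iff two_ne_zero |>.1 (le_antisymm hsq (sq_nonneg _))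

end IST

section Contraction

variable {E : Type*} [SeminormedAddCommGroup E] {Γ : E → E} {r : ℝ} {z : E} {x : ℕ → E}

theorem norm_sub_le_pow_mul_of_contraction (hr : 0 ≤ r)
    (hΓ : ∀ u v, ‖Γ u - Γ v‖ ≤ r * ‖u - v‖) (hz : Γ z = z) (hx : ∀ t, x (t + 1) = Γ (x t))
    (t : ℕ) : ‖x t - z‖ ≤ r ^ t * ‖x 0 - z‖ := by
  induction t with
  | zero => simp
  | succ t ih =>
    calc ‖x (t + 1) - z‖ = ‖Γ (x t) - Γ z‖ := by rw [hx, hz]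
      _ ≤ r * ‖x t - z‖ := hΓ _ _
      _ ≤ r * (r ^ t * ‖x 0 - z‖) := by gcongr
      _ = r ^ (t + 1) * ‖x 0 - z‖ := by ring

theorem tendsto_of_norm_sub_le_pow_mul (hr₀ : 0 ≤ r) (hr₁ : r < 1) {C : ℝ}
    (h : ∀ t, ‖x t - z‖ ≤ r ^ t * C) : Filter.Tendsto x Filter.atTop (nhds z) :=
  tendsto_iff_norm_sub_tendsto_zero.2 <| squeeze_zero (fun _ => norm_nonneg _) h <| by
    simpa using (tendsto_pow_atTop_nhds_zero_of_lt_one hr₀ hr₁).mul_const C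

end Contraction

theorem batch_ist_converges_general {n m : ℕ}
    (A : EuclideanSpace ℝ (Fin n) →L[ℝ] EuclideanSpace ℝ (Fin m))
    (y : EuclideanSpace ℝ (Fin m)) (lam μ τ : ℝ)
    (hlam : 0 < lam) (hμ : 0 < μ) (hτ : 0 < τ) (hA : τ * ‖A‖^2 ≤ 1)
    (z : EuclideanSpace ℝ (Fin n)) (hz : ∀ w, enet A y lam μ z ≤ enet A y lam μ w)
    (x : ℕ → EuclideanSpace ℝ (Fin n))
    (hrec : ∀ t : ℕ, x (t + 1) = istMap A y lam μ τ (x t)) :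
    (∀ t : ℕ, ‖x t - z‖ ≤ ((1 + μ * τ)⁻¹)^t * ‖x 0 - z‖) ∧
    Filter.Tendsto x Filter.atTop (nhds z) := by
  have hfixed := istMap_eq_self_of_forall_enet_le A y hlam.le hμ.le hτ hA hz
  have hbound := norm_sub_le_pow_mul_of_contraction (by positivity)
    (norm_istMap_sub_le A y hlam.le hμ.le hτ.le hA) hfixed hrec
  have hrate : (1 + μ * τ)⁻¹ < 1 := inv_lt_one_of_one_lt₀ (by nlinarith [mul_pos hμ hτ])
  exact ⟨hbound, tendsto_of_norm_sub_le_pow_mul (by positivity) hrate hbound⟩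

theorem batch_ist_converges {n m : ℕ}
    (A : EuclideanSpace ℝ (Fin n) →L[ℝ] EuclideanSpace ℝ (Fin m))
    (y : EuclideanSpace ℝ (Fin m)) (lam μ τ : ℝ)
    (hlam : 0 < lam) (hμ : 0 < μ) (hτ : 0 < τ) (hA : τ * ‖A‖^2 ≤ 1)
    (z : EuclideanSpace ℝ (Fin n)) (hz : ∀ w, enet A y lam μ z ≤ enet A y lam μ w)
    (x : ℕ → EuclideanSpace ℝ (Fin n)) (hx0 : x 0 = 0)
    (hrec : ∀ t : ℕ, x (t + 1) = istMap A y lam μ τ (x t)) :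
    (∀ t : ℕ, ‖x t - z‖ ≤ ((1 + μ * τ)⁻¹)^t * ‖x 0 - z‖) ∧
    Filter.Tendsto x Filter.atTop (nhds z) :=
  batch_ist_converges_general A y lam μ τ hlam hμ hτ hA z hz x hrec
end

section
/- (Lemma 3.) If x_t minimizes the surrogate f_{t−1}(·, x_{t−1}) (i.e., x_t = Γ_{t−1}(x_{t−1})), and z_{t−1} minimizes f_{t−1}, then f_{t−1}(x_t) − f_{t−1}(z_{t−1}) ≤ (1/τ)‖x_{t−1} − z_{t−1}‖₂². -/
/-! The correction `surr A τ · b` is nonnegative because `τ‖A‖² ≤ 1`, and it is at most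
`‖· - b‖² / (2τ)` since it differs from that by a square. So the majorize-minimize chain
`f xt ≤ f xt + s(xt, b) ≤ f z + s(z, b) ≤ f z + ‖b - z‖² / (2τ)` gives the bound. -/

theorem mul_sq_norm_apply_le_of_mul_sq_opNorm_le {E F : Type*}
    [SeminormedAddCommGroup E] [NormedSpace ℝ E] [SeminormedAddCommGroup F] [NormedSpace ℝ F]
    (A : E →L[ℝ] F) {τ : ℝ} (hτ : 0 ≤ τ) (hA : τ * ‖A‖ ^ 2 ≤ 1) (x : E) :
    τ * ‖A x‖ ^ 2 ≤ ‖x‖ ^ 2 :=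
  calc τ * ‖A x‖ ^ 2 ≤ τ * (‖A‖ * ‖x‖) ^ 2 := by gcongr; exact A.le_opNorm x
    _ = τ * ‖A‖ ^ 2 * ‖x‖ ^ 2 := by ring
    _ ≤ 1 * ‖x‖ ^ 2 := by gcongr
    _ = ‖x‖ ^ 2 := one_mul _

section Surrogate

variable {n m : ℕ} (A : EuclideanSpace ℝ (Fin n) →L[ℝ] EuclideanSpace ℝ (Fin m)) {τ : ℝ}

theorem surr_nonneg (hτ : 0 < τ) (hA : τ * ‖A‖ ^ 2 ≤ 1) (x b : EuclideanSpace ℝ (Fin n)) :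
    0 ≤ surr A τ x b := by
  have hAxb := mul_sq_norm_apply_le_of_mul_sq_opNorm_le A hτ.le hA (x - b)
  have hsurr : surr A τ x b = (1 / (2 * τ)) * (‖x - b‖ ^ 2 - τ * ‖A (x - b)‖ ^ 2) := by
    rw [surr, map_sub]
    field_simp
  rw [hsurr]
  exact mul_nonneg (by positivity) (sub_nonneg.mpr hAxb)

theorem surr_le (x b : EuclideanSpace ℝ (Fin n)) :
    surr A τ x b ≤ (1 / (2 * τ)) * ‖x - b‖ ^ 2 :=
  sub_le_self _ (by positivity)

end Surrogate

theorem lemma3_general {n m : ℕ}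
    (A : EuclideanSpace ℝ (Fin n) →L[ℝ] EuclideanSpace ℝ (Fin m))
    (y : EuclideanSpace ℝ (Fin m)) (lam μ τ : ℝ)
    (hτ : 0 < τ) (hA : τ * ‖A‖^2 ≤ 1)
    (b xt z : EuclideanSpace ℝ (Fin n))
    (hxt : ∀ w, enet A y lam μ xt + surr A τ xt b ≤ enet A y lam μ w + surr A τ w b) :
    enet A y lam μ xt - enet A y lam μ z ≤ (1 / τ) * ‖b - z‖^2 :=
  calc enet A y lam μ xt - enet A y lam μ z ≤ surr A τ z b := by
        linarith [hxt z, surr_nonneg A hτ hA xt b]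
    _ ≤ (1 / (2 * τ)) * ‖z - b‖ ^ 2 := surr_le A z b
    _ ≤ (1 / τ) * ‖b - z‖ ^ 2 := by
        rw [norm_sub_rev]
        gcongr
        linarith

theorem lemma3 {n m : ℕ}
    (A : EuclideanSpace ℝ (Fin n) →L[ℝ] EuclideanSpace ℝ (Fin m))
    (y : EuclideanSpace ℝ (Fin m)) (lam μ τ : ℝ)
    (hlam : 0 < lam) (hμ : 0 < μ) (hτ : 0 < τ) (hA : τ * ‖A‖^2 ≤ 1)
    (b xt z : EuclideanSpace ℝ (Fin n))
    (hxt : ∀ w, enet A y lam μ xt + surr A τ xt b ≤ enet A y lam μ w + surr A τ w b)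
    (hz : ∀ w, enet A y lam μ z ≤ enet A y lam μ w) :
    enet A y lam μ xt - enet A y lam μ z ≤ (1 / τ) * ‖b - z‖^2 :=
  lemma3_general A y lam μ τ hτ hA b xt z hxt
end
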